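/- arXiv:2605.24355 — 2 statements merged into one kernel-verified Lean document; each statement's English description precedes it below -/
import Mathlib

section
/- Let m be even and let f be a bent function in m variables whose dual f* satisfies f*(0) = 0 (equivalently, W_f(0) = 2^{m/2}). Then f has algebraic degree at most 2 if and only if there exists an invertible 𝔽₂-linear map π of 𝔽₂^m such that f(p) + f*(π(b)) + p·π(b) = f(p+b) for all p, b ∈ 𝔽₂^m. -/
open Finset

/-- dot product on 𝔽₂^m -/
def dotp {m : ℕ} (a x : Fin m → ZMod 2) : ZMod 2 := ∑ i, a i * x i

/-- (−1)^a for a ∈ 𝔽₂, as an integer -/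
def sgn (a : ZMod 2) : ℤ := if a = 0 then 1 else -1

/-- Walsh transform of f on a finite subset P of 𝔽₂^m -/
def walsh {m : ℕ} (P : Finset (Fin m → ZMod 2)) (f : (Fin m → ZMod 2) → ZMod 2)
    (u : Fin m → ZMod 2) : ℤ :=
  ∑ x ∈ P, sgn (f x + dotp u x)

/-- Walsh transform of f on all of 𝔽₂^m -/
def walshF {m : ℕ} (f : (Fin m → ZMod 2) → ZMod 2) (u : Fin m → ZMod 2) : ℤ :=
  walsh Finset.univ f u


/-- The algebraic degree of a Boolean function is at most d. -/
def DegLE {m : ℕ} (d : ℕ) (g : (Fin m → ZMod 2) → ZMod 2) : Prop :=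
  ∃ c : Finset (Fin m) → ZMod 2,
    (∀ S : Finset (Fin m), d < S.card → c S = 0) ∧
    ∀ x, g x = ∑ S : Finset (Fin m), c S * ∏ i ∈ S, x i

set_option linter.unusedSectionVars false
set_option linter.unusedVariables false

def ev {m : ℕ} (k : Fin m) : Fin m → ZMod 2 := fun j => if k = j then 1 else 0
def indF {m : ℕ} (T : Finset (Fin m)) : Fin m → ZMod 2 := fun i => if i ∈ T then 1 else 0

lemma dotp_comm {m : ℕ} (a x : Fin m → ZMod 2) : dotp a x = dotp x a := by
  unfold dotp; exact Finset.sum_congr rfl fun i _ => mul_comm _ _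

lemma dotp_zero_left {m : ℕ} (x : Fin m → ZMod 2) : dotp 0 x = 0 := by
  simp [dotp]

lemma sgn_add : ∀ a b : ZMod 2, sgn (a + b) = sgn a * sgn b := by decide

lemma sgn_inj : ∀ a b : ZMod 2, sgn a = sgn b → a = b := by decide

lemma dotp_indF {m : ℕ} (T : Finset (Fin m)) (w : Fin m → ZMod 2) :
    dotp (indF T) w = ∑ i ∈ T, w i := by
  unfold dotp indF
  rw [Finset.sum_congr rfl (fun i _ => by rw [ite_mul, one_mul, zero_mul] :
    ∀ i ∈ univ, (if i ∈ T then 1 else 0) * w i = if i ∈ T then w i else 0),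
    Finset.sum_ite_mem, Finset.univ_inter]

lemma indF_insert {m : ℕ} (k : Fin m) (T : Finset (Fin m)) (hk : k ∉ T) :
    indF (insert k T) = indF T + ev k := by
  funext i
  simp only [indF, ev, Pi.add_apply, Finset.mem_insert]
  by_cases h1 : i = k
  · subst h1; simp [hk]
  · simp [h1, Ne.symm h1]

lemma two_pow_nsmul {k : ℕ} (hk : k ≠ 0) (x : ZMod 2) : (2^k) • x = 0 := by
  rw [nsmul_eq_mul]
  push_cast
  rw [show ((2:ZMod 2) = 0) by decide, zero_pow hk, zero_mul]

lemma sum_powerset_sum {m : ℕ} (S : Finset (Fin m)) (w : Fin m → ZMod 2) :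
    ∑ T ∈ S.powerset, ∑ i ∈ T, w i = if S.card = 1 then ∑ i ∈ S, w i else 0 := by
  induction S using Finset.induction_on with
  | empty => simp
  | @insert a S ha ih =>
    rw [Finset.powerset_insert, Finset.sum_union, Finset.sum_image]
    · have h2 : ∀ T ∈ S.powerset, ∑ i ∈ insert a T, w i = w a + ∑ i ∈ T, w i := by
        intro T hT
        rw [Finset.sum_insert]
        exact fun h => ha (Finset.mem_powerset.mp hT h)
      rw [Finset.sum_congr rfl h2, Finset.sum_add_distrib, Finset.sum_const, ih,
        Finset.card_powerset]
      rcases Nat.eq_zero_or_pos S.card with h | h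
      · have : S = ∅ := Finset.card_eq_zero.mp h
        subst this
        simp
      · have hc1 : (insert a S).card ≠ 1 := by
          rw [Finset.card_insert_of_notMem ha]; omega
        rw [if_neg hc1, two_pow_nsmul (by omega), zero_add, CharTwo.add_self_eq_zero]
    · intro x hx y hy hxy
      have hax : a ∉ x := fun h => ha (Finset.mem_powerset.mp hx h)
      have hay : a ∉ y := fun h => ha (Finset.mem_powerset.mp hy h)
      rw [← Finset.erase_insert hax, ← Finset.erase_insert hay, hxy]
    · rw [Finset.disjoint_right]
      intro T hT
      simp only [Finset.mem_image] at hT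
      obtain ⟨T', hT', rfl⟩ := hT
      intro hmem
      exact ha (Finset.mem_powerset.mp hmem (Finset.mem_insert_self a T'))

lemma powerset_double {α : Type*} [DecidableEq α] (U : Finset α) :
    ∀ h : Finset α → ZMod 2, ∑ S ∈ U.powerset, ∑ T ∈ S.powerset, h T = h U := by
  induction U using Finset.induction_on with
  | empty => simp
  | @insert a U ha ih =>
    intro h
    rw [Finset.powerset_insert, Finset.sum_union, Finset.sum_image]
    · have h2 : ∀ S ∈ U.powerset, ∑ T ∈ (insert a S).powerset, h T
          = (∑ T ∈ S.powerset, h T) + ∑ T ∈ S.powerset, h (insert a T) := by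
        intro S hS
        have haS : a ∉ S := fun hx => ha (Finset.mem_powerset.mp hS hx)
        rw [Finset.powerset_insert, Finset.sum_union, Finset.sum_image]
        · intro x hx y hy hxy
          have hax : a ∉ x := fun hh => haS (Finset.mem_powerset.mp hx hh)
          have hay : a ∉ y := fun hh => haS (Finset.mem_powerset.mp hy hh)
          rw [← Finset.erase_insert hax, ← Finset.erase_insert hay, hxy]
        · rw [Finset.disjoint_right]
          intro T hT
          simp only [Finset.mem_image] at hT
          obtain ⟨T', hT', rfl⟩ := hT
          intro hmem
          exact haS (Finset.mem_powerset.mp hmem (Finset.mem_insert_self a T'))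
      rw [Finset.sum_congr rfl h2, Finset.sum_add_distrib, ih, ih,
        ← add_assoc, CharTwo.add_self_eq_zero, zero_add]
    · intro x hx y hy hxy
      have hax : a ∉ x := fun h => ha (Finset.mem_powerset.mp hx h)
      have hay : a ∉ y := fun h => ha (Finset.mem_powerset.mp hy h)
      rw [← Finset.erase_insert hax, ← Finset.erase_insert hay, hxy]
    · rw [Finset.disjoint_right]
      intro T hT
      simp only [Finset.mem_image] at hT
      obtain ⟨T', hT', rfl⟩ := hT
      intro hmem
      exact ha (Finset.mem_powerset.mp hmem (Finset.mem_insert_self a T'))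

section
variable {m : ℕ} (f : (Fin m → ZMod 2) → ZMod 2) (π : (Fin m → ZMod 2) →ₗ[ZMod 2] (Fin m → ZMod 2))

lemma degle_of_add
    (hadd : ∀ x y, f (x + y) = f x + f y + f 0 + dotp x (π y)) : DegLE 2 f := by
  refine ⟨fun S => ∑ T ∈ S.powerset, f (indF T), ?_, ?_⟩
  · intro S hS
    obtain ⟨k, hk⟩ : S.Nonempty := Finset.card_pos.mp (by omega)
    have hkS : k ∉ S.erase k := Finset.notMem_erase k S
    have hcard : (S.erase k).card = S.card - 1 := Finset.card_erase_of_mem hk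
    show (∑ T ∈ S.powerset, f (indF T)) = 0
    rw [← Finset.insert_erase hk, Finset.sum_powerset_insert hkS]
    have h2 : ∀ T ∈ (S.erase k).powerset, f (indF (insert k T))
        = f (indF T) + ((f (ev k) + f 0) + dotp (indF T) (π (ev k))) := by
      intro T hT
      have hkT : k ∉ T := fun h => hkS (Finset.mem_powerset.mp hT h)
      rw [indF_insert k T hkT, hadd]
      ring
    rw [Finset.sum_congr rfl h2, Finset.sum_add_distrib, ← add_assoc,
      CharTwo.add_self_eq_zero, zero_add, Finset.sum_add_distrib, Finset.sum_const]
    have e1 : (S.erase k).powerset.card • (f (ev k) + f 0) = 0 := by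
      rw [Finset.card_powerset]
      exact two_pow_nsmul (by omega) _
    have e2 : ∑ T ∈ (S.erase k).powerset, dotp (indF T) (π (ev k)) = 0 := by
      rw [Finset.sum_congr rfl (fun T _ => dotp_indF T (π (ev k))), sum_powerset_sum]
      rw [if_neg (by omega)]
    rw [e1, e2, zero_add]
  · intro x
    classical
    set U : Finset (Fin m) := Finset.univ.filter (fun i => x i = 1) with hU
    have hx01 : ∀ v : ZMod 2, v = 0 ∨ v = 1 := by decide
    have hindU : indF U = x := by
      funext i
      rcases hx01 (x i) with h | h <;> simp [indF, hU, h]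
    have hprod : ∀ S : Finset (Fin m), (∏ i ∈ S, x i) = if S ⊆ U then 1 else 0 := by
      intro S
      split
      · next h =>
        exact Finset.prod_eq_one fun i hi => by
          have := Finset.mem_filter.mp (h hi)
          exact this.2
      · next h =>
        obtain ⟨i, hiS, hiU⟩ := Finset.not_subset.mp h
        refine Finset.prod_eq_zero hiS ?_
        rcases hx01 (x i) with h' | h'
        · exact h'
        · exact absurd (Finset.mem_filter.mpr ⟨Finset.mem_univ i, h'⟩) hiU
    have : (∑ S : Finset (Fin m), (∑ T ∈ S.powerset, f (indF T)) * ∏ i ∈ S, x i)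
        = ∑ S ∈ U.powerset, ∑ T ∈ S.powerset, f (indF T) := by
      rw [Finset.sum_congr rfl (fun S _ => by rw [hprod S, mul_ite, mul_one, mul_zero])]
      rw [← Finset.sum_filter]
      refine Finset.sum_congr ?_ (fun _ _ => rfl)
      ext S
      simp [Finset.mem_powerset]
    rw [this, powerset_double U (fun T => f (indF T)), hindU]

end

lemma eight_lemma {m : ℕ} (f : (Fin m → ZMod 2) → ZMod 2)
    (c : Finset (Fin m) → ZMod 2)
    (hc : ∀ S : Finset (Fin m), 2 < S.card → c S = 0)
    (hrep : ∀ x, f x = ∑ S : Finset (Fin m), c S * ∏ i ∈ S, x i)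
    (a b d : Fin m → ZMod 2) :
    f 0 + f a + f b + f d + f (a + b) + f (a + d) + f (b + d) + f (a + b + d) = 0 := by
  rw [hrep 0, hrep a, hrep b, hrep d, hrep (a+b), hrep (a+d), hrep (b+d), hrep (a+b+d)]
  simp only [← Finset.sum_add_distrib]
  refine Finset.sum_eq_zero fun S _ => ?_
  by_cases h3 : 2 < S.card
  · simp [hc S h3]
  · have hcases : S.card = 0 ∨ S.card = 1 ∨ S.card = 2 := by omega
    rcases hcases with h | h | h
    · rw [Finset.card_eq_zero] at h
      subst h
      simp only [Finset.prod_empty, mul_one]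
      have : ∀ z : ZMod 2, z + z + z + z + z + z + z + z = 0 := by decide
      exact this _
    · rw [Finset.card_eq_one] at h
      obtain ⟨i, rfl⟩ := h
      simp only [Finset.prod_singleton, Pi.add_apply, Pi.zero_apply]
      have : ∀ z α β γ : ZMod 2,
          z * 0 + z * α + z * β + z * γ + z * (α + β) + z * (α + γ) + z * (β + γ)
            + z * (α + β + γ) = 0 := by decide
      exact this _ _ _ _
    · rw [Finset.card_eq_two] at h
      obtain ⟨i, j, hij, rfl⟩ := h
      simp only [Finset.prod_pair hij, Pi.add_apply, Pi.zero_apply]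
      have : ∀ z α₁ α₂ β₁ β₂ γ₁ γ₂ : ZMod 2,
          z * (0 * 0) + z * (α₁ * α₂) + z * (β₁ * β₂) + z * (γ₁ * γ₂)
            + z * ((α₁ + β₁) * (α₂ + β₂)) + z * ((α₁ + γ₁) * (α₂ + γ₂))
            + z * ((β₁ + γ₁) * (β₂ + γ₂))
            + z * ((α₁ + β₁ + γ₁) * (α₂ + β₂ + γ₂)) = 0 := by decide
      exact this _ _ _ _ _ _ _
def Dq {m : ℕ} (f : (Fin m → ZMod 2) → ZMod 2) (x y : Fin m → ZMod 2) : ZMod 2 :=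
  f (x + y) + f x + f y + f 0

lemma h2z : (2 : ZMod 2) = 0 := by decide

section Dqlem
variable {m : ℕ} (f : (Fin m → ZMod 2) → ZMod 2) (c : Finset (Fin m) → ZMod 2)
  (hc : ∀ S : Finset (Fin m), 2 < S.card → c S = 0)
  (hrep : ∀ x, f x = ∑ S : Finset (Fin m), c S * ∏ i ∈ S, x i)

include hc hrep

lemma Dq_add_left (x x' y : Fin m → ZMod 2) :
    Dq f (x + x') y = Dq f x y + Dq f x' y := by
  have h8 := eight_lemma f c hc hrep x x' y
  unfold Dq
  linear_combination h8 - (f y + f 0 + f (x + y) + f x + f (x' + y) + f x') * h2z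

lemma Dq_comm (x y : Fin m → ZMod 2) : Dq f x y = Dq f y x := by
  unfold Dq
  rw [add_comm x y]
  ring

lemma Dq_zero_left (y : Fin m → ZMod 2) : Dq f 0 y = 0 := by
  unfold Dq
  rw [zero_add]
  linear_combination (f y + f 0) * h2z

lemma Dq_smul_left (t : ZMod 2) (x y : Fin m → ZMod 2) :
    Dq f (t • x) y = t * Dq f x y := by
  have ht : t = 0 ∨ t = 1 := by revert t; decide
  rcases ht with rfl | rfl
  · rw [zero_smul, Dq_zero_left f c hc hrep, zero_mul]
  · rw [one_smul, one_mul]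

lemma Dq_sum_left {ι : Type*} (s : Finset ι) (v : ι → (Fin m → ZMod 2))
    (y : Fin m → ZMod 2) :
    Dq f (∑ i ∈ s, v i) y = ∑ i ∈ s, Dq f (v i) y := by
  classical
  induction s using Finset.induction_on with
  | empty => simpa using Dq_zero_left f c hc hrep y
  | @insert a s ha ih =>
    rw [Finset.sum_insert ha, Finset.sum_insert ha, Dq_add_left f c hc hrep, ih]

lemma Dq_expand (x y : Fin m → ZMod 2) :
    Dq f x y = ∑ i : Fin m, ∑ j : Fin m, x i * (y j * Dq f (ev i) (ev j)) := by
  have hx : x = ∑ i : Fin m, x i • ev i := pi_eq_sum_univ x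
  have hy : y = ∑ j : Fin m, y j • ev j := pi_eq_sum_univ y
  conv_lhs => rw [hx, hy]
  rw [Dq_sum_left f c hc hrep]
  refine Finset.sum_congr rfl fun i _ => ?_
  rw [Dq_smul_left f c hc hrep]
  rw [Dq_comm f c hc hrep, Dq_sum_left f c hc hrep]
  rw [Finset.mul_sum]
  refine Finset.sum_congr rfl fun j _ => ?_
  rw [Dq_smul_left f c hc hrep, Dq_comm f c hc hrep (ev j)]

end Dqlem
lemma dotp_zero_right {m : ℕ} (x : Fin m → ZMod 2) : dotp x 0 = 0 := by simp [dotp]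

lemma dotp_add_right {m : ℕ} (a x y : Fin m → ZMod 2) :
    dotp a (x + y) = dotp a x + dotp a y := by
  unfold dotp
  rw [← Finset.sum_add_distrib]
  exact Finset.sum_congr rfl fun i _ => by simp [mul_add]

lemma dotp_ev_left {m : ℕ} (i : Fin m) (b : Fin m → ZMod 2) : dotp (ev i) b = b i := by
  simp [dotp, ev, ite_mul, Finset.sum_ite_eq]

theorem stmt_5 (m : ℕ) (hm : Even m) (f fstar : (Fin m → ZMod 2) → ZMod 2)
    (hdual : ∀ a, walshF f a = sgn (fstar a) * 2 ^ (m / 2))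
    (h0 : fstar 0 = 0) :
    DegLE 2 f ↔
      ∃ π : (Fin m → ZMod 2) ≃ₗ[ZMod 2] (Fin m → ZMod 2),
        ∀ p b : Fin m → ZMod 2, f p + fstar (π b) + dotp p (π b) = f (p + b) := by
  constructor
  · rintro ⟨c, hc, hrep⟩
    set πL : (Fin m → ZMod 2) →ₗ[ZMod 2] (Fin m → ZMod 2) :=
      Matrix.mulVecLin (Matrix.of fun i j => Dq f (ev i) (ev j)) with hπL
    have hπapp : ∀ y i, πL y i = ∑ j, Dq f (ev i) (ev j) * y j := by
      intro y i
      simp [hπL, Matrix.mulVecLin_apply, Matrix.mulVec, dotProduct]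
    have hdot : ∀ x y, dotp x (πL y) = Dq f x y := by
      intro x y
      rw [Dq_expand f c hc hrep]
      unfold dotp
      refine Finset.sum_congr rfl fun i _ => ?_
      rw [hπapp, Finset.mul_sum]
      exact Finset.sum_congr rfl fun j _ => by ring
    have hsum0 : (∑ x : Fin m → ZMod 2, sgn (f x)) = 2 ^ (m / 2) := by
      have h := hdual 0
      rw [h0] at h
      unfold walshF walsh at h
      rw [Finset.sum_congr rfl
        (fun x _ => by rw [dotp_zero_left, add_zero] :
          ∀ x ∈ Finset.univ, sgn (f x + dotp 0 x) = sgn (f x))] at h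
      simpa [sgn] using h
    have hWconst : ∀ b : Fin m → ZMod 2,
        (∑ x : Fin m → ZMod 2, sgn (f (x + b))) = ∑ x : Fin m → ZMod 2, sgn (f x) := by
      intro b
      exact Fintype.sum_equiv (Equiv.addRight b) _ _ (fun x => by simp)
    have hstar : ∀ b, fstar (πL b) = f b + f 0 := by
      intro b
      have hcalc : walshF f (πL b) = sgn (f b + f 0) * 2 ^ (m / 2) := by
        unfold walshF walsh
        have hterm : ∀ x ∈ Finset.univ,
            sgn (f x + dotp (πL b) x) = sgn (f (x + b)) * sgn (f b + f 0) := by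
          intro x _
          rw [dotp_comm, hdot]
          have harg : f x + Dq f x b = f (x + b) + (f b + f 0) := by
            unfold Dq
            linear_combination (f x) * h2z
          rw [harg, sgn_add]
        rw [Finset.sum_congr rfl hterm, ← Finset.sum_mul, hWconst b, hsum0]
        ring
      have h := hdual (πL b)
      rw [hcalc] at h
      exact (sgn_inj _ _ (mul_right_cancel₀ (pow_ne_zero (m / 2) two_ne_zero) h)).symm
    have hker : ∀ b : Fin m → ZMod 2, πL b = 0 → b = 0 := by
      intro b hb
      have hfb : f b + f 0 = 0 := by
        have h := hstar b
        rw [hb, h0] at h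
        exact h.symm
      have hfxb : ∀ x, f (x + b) = f x := by
        intro x
        have h1 : Dq f x b = 0 := by
          rw [← hdot x b, hb, dotp_zero_right]
        unfold Dq at h1
        linear_combination h1 + hfb - (f x + f b + f 0) * h2z
      have hdotab : ∀ a, dotp a b = 0 := by
        intro a
        have hWa : walshF f a = sgn (dotp a b) * walshF f a := by
          unfold walshF walsh
          have hre : (∑ x : Fin m → ZMod 2, sgn (f (x + b) + dotp a (x + b)))
              = ∑ x : Fin m → ZMod 2, sgn (f x + dotp a x) :=
            Fintype.sum_equiv (Equiv.addRight b) _ _ (fun x => by simp)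
          have hterm : ∀ x ∈ Finset.univ,
              sgn (f (x + b) + dotp a (x + b)) = sgn (dotp a b) * sgn (f x + dotp a x) := by
            intro x _
            rw [hfxb, dotp_add_right, ← add_assoc, sgn_add, mul_comm]
          conv_lhs => rw [← hre]
          rw [Finset.sum_congr rfl hterm, ← Finset.mul_sum]
        have hWne : walshF f a ≠ 0 := by
          rw [hdual a]
          rcases (show ∀ v : ZMod 2, sgn v = 1 ∨ sgn v = -1 by decide) (fstar a) with h | h <;>
            rw [h] <;> simp [pow_ne_zero]
        rcases (show ∀ v : ZMod 2, v = 0 ∨ v = 1 by decide) (dotp a b) with h | h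
        · exact h
        · rw [h] at hWa
          have hs1 : sgn 1 = -1 := by decide
          rw [hs1] at hWa
          omega
      funext i
      have := hdotab (ev i)
      rw [dotp_ev_left] at this
      exact this
    have hinj : Function.Injective πL :=
      LinearMap.ker_eq_bot.mp (LinearMap.ker_eq_bot'.mpr hker)
    have hsurj : Function.Surjective πL := LinearMap.injective_iff_surjective.mp hinj
    refine ⟨LinearEquiv.ofBijective πL ⟨hinj, hsurj⟩, ?_⟩
    intro p b
    show f p + fstar (πL b) + dotp p (πL b) = f (p + b)
    rw [hstar b, hdot p b]
    unfold Dq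
    linear_combination (f p + f b + f 0) * h2z
  · rintro ⟨π, hπ⟩
    have hstar0 : ∀ b, fstar (π b) = f b + f 0 := by
      intro b
      have h := hπ 0 b
      rw [zero_add, dotp_zero_left, add_zero] at h
      linear_combination h - (f 0) * h2z
    have hadd : ∀ x y, f (x + y) = f x + f y + f 0 + dotp x (π.toLinearMap y) := by
      intro x y
      have h1 := hπ x y
      rw [hstar0 y] at h1
      have he : π.toLinearMap y = π y := rfl
      rw [he]
      linear_combination -h1
    exact degle_of_add f π.toLinearMap hadd
end

section
/- Let 0 ≤ r < m with m + r even and let f be an r-plateaued Boolean function in m variables with no nonzero linear structure. Write W_f(x) = (−1)^{g(x)}·2^{(m+r)/2} for x ∈ S_f (defining g : S_f → 𝔽₂) and for b ∈ 𝔽₂^m set f_b(x) = b·x + f(b) + g(x) for x ∈ S_f, with blocks B^{f_b} = {p ∈ S_f : f_b(p) = 1}. Then the addition design AD_f has the triple symmetric difference property: for any b₁, b₂, b₃ ∈ 𝔽₂^m there exists b₄ ∈ 𝔽₂^m such that the symmetric difference B^{f_{b₁}} Δ B^{f_{b₂}} Δ B^{f_{b₃}} equals B^{f_{b₄}} or equals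 S_f ∖ B^{f_{b₄}}. -/
set_option synthInstance.maxSize 2000
set_option synthInstance.maxHeartbeats 1000000
set_option maxHeartbeats 1000000

open Finset

open scoped symmDiff

/-- The Walsh support S_f of a Boolean function, as a finset. -/
def walshSupp {m : ℕ} (f : (Fin m → ZMod 2) → ZMod 2) : Finset (Fin m → ZMod 2) :=
  Finset.univ.filter (fun a => walshF f a ≠ 0)

/-- The block B^{f_b} ⊆ S_f of the addition design, where f_b(x) = b·x + f(b) + g(x). -/
def addBlock {m : ℕ} (f g : (Fin m → ZMod 2) → ZMod 2) (b : Fin m → ZMod 2) :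
    Finset (Fin m → ZMod 2) :=
  (walshSupp f).filter (fun p => dotp b p + f b + g p = 1)


lemma dotp_add {m : ℕ} (a b x : Fin m → ZMod 2) :
    dotp (a + b) x = dotp a x + dotp b x := by
  simp [dotp, add_mul, Finset.sum_add_distrib]

theorem stmt_11 (m r : ℕ) (hrm : r < m) (hpar : Even (m + r))
    (f : (Fin m → ZMod 2) → ZMod 2)
    (hplat : ∀ a, walshF f a = 0 ∨ walshF f a = 2 ^ ((m + r) / 2) ∨
      walshF f a = -2 ^ ((m + r) / 2))
    (g : (Fin m → ZMod 2) → ZMod 2)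
    (hg : ∀ x ∈ walshSupp f, walshF f x = sgn (g x) * 2 ^ ((m + r) / 2))
    (hls : ∀ a : Fin m → ZMod 2, a ≠ 0 → ¬ ∃ c : ZMod 2, ∀ x, f x + f (x + a) = c) :
    ∀ b₁ b₂ b₃ : Fin m → ZMod 2, ∃ b₄ : Fin m → ZMod 2,
      addBlock f g b₁ ∆ addBlock f g b₂ ∆ addBlock f g b₃ = addBlock f g b₄ ∨
      addBlock f g b₁ ∆ addBlock f g b₂ ∆ addBlock f g b₃ = walshSupp f \ addBlock f g b₄ := by
  intro b₁ b₂ b₃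
  refine ⟨b₁ + b₂ + b₃, ?_⟩
  have key : ∀ p, dotp (b₁ + b₂ + b₃) p = dotp b₁ p + dotp b₂ p + dotp b₃ p := by
    intro p; rw [dotp_add, dotp_add]
  by_cases hε : f b₁ + f b₂ + f b₃ + f (b₁ + b₂ + b₃) = 0
  · left
    ext p
    simp only [Finset.mem_symmDiff, addBlock, Finset.mem_filter]
    by_cases hp : p ∈ walshSupp f
    · simp only [hp, true_and, not_true_eq_false, false_and, and_true, not_and,
        not_false_eq_true, forall_const]
      rw [key]
      generalize f b₁ = c₁ at hε ⊢
      generalize f b₂ = c₂ at hε ⊢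
      generalize f b₃ = c₃ at hε ⊢
      generalize f (b₁ + b₂ + b₃) = c₄ at hε ⊢
      generalize dotp b₁ p = d₁
      generalize dotp b₂ p = d₂
      generalize dotp b₃ p = d₃
      generalize g p = e
      revert hε; revert c₁ c₂ c₃ c₄ d₁ d₂ d₃ e; decide
    · simp [hp]
  · right
    ext p
    simp only [Finset.mem_symmDiff, addBlock, Finset.mem_filter, Finset.mem_sdiff]
    by_cases hp : p ∈ walshSupp f
    · simp only [hp, true_and, not_true_eq_false, false_and, and_true, not_and,
        not_false_eq_true, forall_const]
      rw [key]
      generalize f b₁ = c₁ at hε ⊢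
      generalize f b₂ = c₂ at hε ⊢
      generalize f b₃ = c₃ at hε ⊢
      generalize f (b₁ + b₂ + b₃) = c₄ at hε ⊢
      generalize dotp b₁ p = d₁
      generalize dotp b₂ p = d₂
      generalize dotp b₃ p = d₃
      generalize g p = e
      revert hε; revert c₁ c₂ c₃ c₄ d₁ d₂ d₃ e; decide
    · simp [hp]
end
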